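/- arXiv:0707.1525 — 2 statements merged into one kernel-verified Lean document; each statement's English description precedes it below -/
import Mathlib

section
/- Let T be a von Neumann regular commutative ring. Then a subset C ⊆ Spec(T) is ultrafilter closed if and only if C is Zariski closed. Consequently, on Spec(T) the Zariski topology, the patch topology, and the ultrafilter topology all coincide. -/
/-- The ultrafilter limit set: for an ultrafilter `U` on `C ⊆ Spec R`,
`P_U = {a ∈ R | {P ∈ C | a ∈ P} ∈ U}`. -/
def ultraLimit {R : Type*} [CommRing R] (C : Set (PrimeSpectrum R)) (U : Ultrafilter C) :
    Set R :=
  {a : R | {P : C | a ∈ (P : PrimeSpectrum R).asIdeal} ∈ U}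

/-- `C` is ultrafilter closed if it contains every ultrafilter limit prime. -/
def UltraClosed {R : Type*} [CommRing R] (C : Set (PrimeSpectrum R)) : Prop :=
  ∀ U : Ultrafilter C, ∀ P : PrimeSpectrum R, (P.asIdeal : Set R) = ultraLimit C U → P ∈ C

/-- The patch (constructible) topology: the coarsest topology where every `V(I)`
and every `D(a)` is closed; equivalently generated by the Zariski opens together
with the sets `V(a)`. -/
def patchTop (R : Type*) [CommRing R] : TopologicalSpace (PrimeSpectrum R) :=
  TopologicalSpace.generateFrom
    ({s | ∃ I : Ideal R, s = (PrimeSpectrum.zeroLocus (I : Set R))ᶜ} ∪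
     {s | ∃ a : R, s = PrimeSpectrum.zeroLocus {a}})

lemma vnr_isOpen_zeroLocus {T : Type*} [CommRing T]
    (hreg : ∀ c : T, ∃ x : T, c ^ 2 * x = c) (a : T) :
    IsOpen (PrimeSpectrum.zeroLocus ({a} : Set T)) := by
  obtain ⟨x, hx⟩ := hreg a
  have key : (PrimeSpectrum.zeroLocus ({a} : Set T)) =
      (PrimeSpectrum.zeroLocus ({1 - a * x} : Set T))ᶜ := by
    ext Q
    simp only [PrimeSpectrum.mem_zeroLocus, Set.singleton_subset_iff, Set.mem_compl_iff,
      SetLike.mem_coe]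
    constructor
    · intro ha h1
      have h1' : (1 : T) ∈ Q.asIdeal := by
        have := Q.asIdeal.add_mem (Q.asIdeal.mul_mem_right x ha) h1
        simpa using this
      exact Q.isPrime.ne_top (Q.asIdeal.eq_top_iff_one.mpr h1')
    · intro h1
      have hz : a * (1 - a * x) ∈ Q.asIdeal := by
        have h0 : a * (1 - a * x) = 0 := by linear_combination -hx
        rw [h0]; exact Q.asIdeal.zero_mem
      rcases Q.isPrime.mem_or_mem hz with h | h
      · exact h
      · exact absurd h h1
  rw [key]
  exact (PrimeSpectrum.isClosed_zeroLocus _).isOpen_compl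

lemma vnr_cond_open {T : Type*} [CommRing T]
    (hreg : ∀ c : T, ∃ x : T, c ^ 2 * x = c) (P : PrimeSpectrum T) (a : T) :
    IsOpen {Q : PrimeSpectrum T | a ∈ Q.asIdeal ↔ a ∈ P.asIdeal} := by
  by_cases h : a ∈ P.asIdeal
  · have : {Q : PrimeSpectrum T | a ∈ Q.asIdeal ↔ a ∈ P.asIdeal} =
        PrimeSpectrum.zeroLocus ({a} : Set T) := by
      ext Q
      simp [PrimeSpectrum.mem_zeroLocus, Set.singleton_subset_iff, h]
    rw [this]
    exact vnr_isOpen_zeroLocus hreg a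
  · have : {Q : PrimeSpectrum T | a ∈ Q.asIdeal ↔ a ∈ P.asIdeal} =
        (PrimeSpectrum.zeroLocus ({a} : Set T))ᶜ := by
      ext Q
      simp [PrimeSpectrum.mem_zeroLocus, Set.singleton_subset_iff, h]
    rw [this]
    exact (PrimeSpectrum.isClosed_zeroLocus _).isOpen_compl

theorem ultraClosed_iff_zariskiClosed {T : Type*} [CommRing T]
    (hreg : ∀ c : T, ∃ x : T, c ^ 2 * x = c) (C : Set (PrimeSpectrum T)) :
    (UltraClosed C ↔ IsClosed C) ∧
      (@IsClosed _ (patchTop T) C ↔ IsClosed C) := by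
  have htop : patchTop T = (inferInstance : TopologicalSpace (PrimeSpectrum T)) := by
    apply le_antisymm
    · intro s hs
      rw [PrimeSpectrum.isOpen_iff] at hs
      obtain ⟨t, ht⟩ := hs
      have hse : s = (PrimeSpectrum.zeroLocus ((Ideal.span t : Ideal T) : Set T))ᶜ := by
        rw [PrimeSpectrum.zeroLocus_span, ← ht, compl_compl]
      rw [hse]
      exact TopologicalSpace.GenerateOpen.basic _ (Or.inl ⟨Ideal.span t, rfl⟩)
    · unfold patchTop
      rw [TopologicalSpace.le_generateFrom_iff_subset_isOpen]
      rintro s (⟨I, rfl⟩ | ⟨a, rfl⟩)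
      · exact (PrimeSpectrum.isClosed_zeroLocus _).isOpen_compl
      · exact vnr_isOpen_zeroLocus hreg a
  constructor
  · constructor
    · -- UltraClosed → IsClosed
      intro hUC
      rw [← closure_subset_iff_isClosed]
      intro P hP
      classical
      set f : T → Set C := fun a =>
        {Q : C | a ∈ (Q : PrimeSpectrum T).asIdeal ↔ a ∈ P.asIdeal} with hf
      have hNB : (Filter.generate (Set.range f)).NeBot := by
        rw [Filter.generate_neBot_iff]
        intro t hts htf
        have : ∀ u : t, ∃ a : T, f a = (u : Set C) := fun u => hts u.2
        choose g hg using this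
        have hfin : Finite t := htf.to_subtype
        set W : Set (PrimeSpectrum T) :=
          ⋂ u : t, {Q : PrimeSpectrum T | g u ∈ Q.asIdeal ↔ g u ∈ P.asIdeal} with hW
        have hWopen : IsOpen W := isOpen_iInter_of_finite fun u => vnr_cond_open hreg P (g u)
        have hPW : P ∈ W := Set.mem_iInter.mpr fun u => Iff.rfl
        obtain ⟨Q, hQW, hQC⟩ := mem_closure_iff.mp hP W hWopen hPW
        refine ⟨⟨Q, hQC⟩, ?_⟩
        intro u hu
        have h2 : (⟨Q, hQC⟩ : C) ∈ f (g ⟨u, hu⟩) := Set.mem_iInter.mp hQW ⟨u, hu⟩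
        rwa [hg ⟨u, hu⟩] at h2
      set U : Ultrafilter C := @Ultrafilter.of _ (Filter.generate (Set.range f)) hNB with hU
      have hmem : ∀ a : T, f a ∈ U := fun a =>
        (@Ultrafilter.of_le _ (Filter.generate (Set.range f)) hNB)
          (Filter.mem_generate_of_mem (Set.mem_range_self a))
      refine hUC U P ?_
      ext a
      simp only [SetLike.mem_coe, ultraLimit, Set.mem_setOf_eq]
      constructor
      · intro ha
        exact Filter.mem_of_superset (hmem a) fun Q hQ => hQ.mpr ha
      · intro ha
        by_contra h
        have h1 : {Q : C | a ∈ (Q : PrimeSpectrum T).asIdeal}ᶜ ∈ U :=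
          Filter.mem_of_superset (hmem a) fun Q hQ hQ' => h (hQ.mp hQ')
        exact (Ultrafilter.compl_mem_iff_notMem.mp h1) ha
    · -- IsClosed → UltraClosed
      intro hC U P hP
      rw [PrimeSpectrum.isClosed_iff_zeroLocus] at hC
      obtain ⟨s, hs⟩ := hC
      subst hs
      intro a ha
      have huniv : {Q : ↥(PrimeSpectrum.zeroLocus s) |
          a ∈ (Q : PrimeSpectrum T).asIdeal} = Set.univ := by
        ext Q
        simp only [Set.mem_setOf_eq, Set.mem_univ, iff_true]
        exact Q.2 ha
      have hm : a ∈ ultraLimit (PrimeSpectrum.zeroLocus s) U := by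
        show {Q : ↥(PrimeSpectrum.zeroLocus s) | a ∈ (Q : PrimeSpectrum T).asIdeal} ∈ U
        rw [huniv]; exact Filter.univ_mem
      rw [← hP] at hm
      exact hm
  · rw [htop]
end

section
/- Let R be a commutative ring, ι: R → T(R) the canonical map to its associated von Neumann regular ring, C ⊆ Spec(T(R)), and C_R := {ι⁻¹(P) | P ∈ C}. For an ultrafilter 𝒰 on C with corresponding ultrafilter 𝒰_R on C_R, the ultrafilter limit prime of 𝒰_R in R equals the contraction ι⁻¹(P_𝒰) of the ultrafilter limit prime of 𝒰 in T(R). Hence ι^a: Spec(T(R)) → Spec(R) is a homeomorphism for the ultrafilter topologies. -/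
open MvPolynomial in
/-- The ideal of relations `a² X_a - a`, `a X_a² - X_a` (one indeterminate per element). -/
noncomputable def TRel (R : Type*) [CommRing R] : Ideal (MvPolynomial R R) :=
  Ideal.span {p : MvPolynomial R R | ∃ a : R,
    p = C a ^ 2 * X a - C a ∨ p = C a * X a ^ 2 - X a}

/-- The von Neumann regular ring `T(R)` canonically associated with `R`. -/
abbrev TRing (R : Type*) [CommRing R] := MvPolynomial R R ⧸ TRel R

/-- The canonical ring homomorphism `ι : R → T(R)`. -/
noncomputable def iotaT (R : Type*) [CommRing R] : R →+* TRing R :=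
  (Ideal.Quotient.mk (TRel R)).comp MvPolynomial.C

/-!
A prime `Q` of `T(R)` is recovered from its contraction `P = ι⁻¹(Q)`. Since the generator `X_a`
satisfies `a²X_a = a` and `aX_a² = X_a`, under any map to a field it goes to the quasi-inverse of
the image of `a`, which is `0` or its inverse. So ring maps from `T(R)` to a field are determined
by their restriction to `R`; in particular `T(R) → κ(Q)` factors as `T(R) → κ(P) ↪ κ(Q)`, where
`T(R) → κ(P)` is the map extending `R → κ(P)`, so `Q` is its kernel. Hence `ι^a` is bijective,
with inverse `P ↦ ker(T(R) → κ(P))`.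

The ultrafilter statements hold for any ring map `f : R → S`: membership of `a` in the limit of
the pushed-forward ultrafilter is membership of `f a` in the limit of the original one, and
ultrafilters on the image `f^a(C)` lift along the surjection `C → f^a(C)`.
-/

open MvPolynomial

lemma eq_inv_of_sq_mul_eq_of_mul_sq_eq {K : Type*} [Field K] {a x : K}
    (h₁ : a ^ 2 * x = a) (h₂ : a * x ^ 2 = x) : x = a⁻¹ := by
  rcases eq_or_ne a 0 with rfl | ha
  · simpa using h₂.symm
  · have hax : a * x = 1 := mul_left_cancel₀ ha (by linear_combination h₁)
    exact eq_inv_of_mul_eq_one_right hax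

namespace TRing

variable {R : Type*} [CommRing R]

lemma iotaT_sq_mul_mk_X (a : R) :
    iotaT R a ^ 2 * Ideal.Quotient.mk (TRel R) (X a) = iotaT R a := by
  rw [← sub_eq_zero]
  exact Ideal.Quotient.eq_zero_iff_mem.mpr (Ideal.subset_span ⟨a, Or.inl rfl⟩)

lemma iotaT_mul_mk_X_sq (a : R) :
    iotaT R a * Ideal.Quotient.mk (TRel R) (X a) ^ 2 = Ideal.Quotient.mk (TRel R) (X a) := by
  rw [← sub_eq_zero]
  exact Ideal.Quotient.eq_zero_iff_mem.mpr (Ideal.subset_span ⟨a, Or.inr rfl⟩)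

lemma ringHom_ext {K : Type*} [Field K] {φ ψ : TRing R →+* K}
    (h : φ.comp (iotaT R) = ψ.comp (iotaT R)) : φ = ψ := by
  have map_X (χ : TRing R →+* K) (a : R) :
      χ (Ideal.Quotient.mk (TRel R) (X a)) = (χ (iotaT R a))⁻¹ :=
    eq_inv_of_sq_mul_eq_of_mul_sq_eq (by rw [← map_pow, ← map_mul, iotaT_sq_mul_mk_X])
      (by rw [← map_pow, ← map_mul, iotaT_mul_mk_X_sq])
  refine Ideal.Quotient.ringHom_ext (MvPolynomial.ringHom_ext (fun a => congr($h a)) fun a => ?_)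
  simp only [RingHom.comp_apply, map_X]
  exact congr(($h a)⁻¹)

/-- `X_a` goes to `(f a)⁻¹`, which is `0` when `f a = 0`. -/
noncomputable def lift {K : Type*} [Field K] (f : R →+* K) : TRing R →+* K :=
  Ideal.Quotient.lift (TRel R) (eval₂Hom f fun a => (f a)⁻¹) <| by
    refine fun p hp => (Ideal.span_le.mpr ?_ hp : p ∈ RingHom.ker _)
    rintro _ ⟨a, rfl | rfl⟩ <;> rcases eq_or_ne (f a) 0 with h | h <;> simp [h, sq]

@[simp]
lemma lift_iotaT {K : Type*} [Field K] (f : R →+* K) (a : R) : lift f (iotaT R a) = f a :=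
  eval₂Hom_C _ _ _

noncomputable def primeOver (P : PrimeSpectrum R) : PrimeSpectrum (TRing R) :=
  ⟨RingHom.ker (lift (algebraMap R P.asIdeal.ResidueField)), RingHom.ker_isPrime _⟩

lemma comap_primeOver (P : PrimeSpectrum R) :
    PrimeSpectrum.comap (iotaT R) (primeOver P) = P := by
  ext a
  simp [primeOver, PrimeSpectrum.comap_asIdeal]

lemma primeOver_comap (Q : PrimeSpectrum (TRing R)) :
    primeOver (PrimeSpectrum.comap (iotaT R) Q) = Q := by
  set P := PrimeSpectrum.comap (iotaT R) Q
  set j := Ideal.ResidueField.map P.asIdeal Q.asIdeal (iotaT R) rfl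
  have hfactor : j.comp (lift (algebraMap R P.asIdeal.ResidueField)) =
      algebraMap (TRing R) Q.asIdeal.ResidueField :=
    ringHom_ext (by ext a; simpa using Ideal.ResidueField.map_algebraMap _ _ _ _ a)
  ext t
  change lift _ t = 0 ↔ t ∈ Q.asIdeal
  rw [← Ideal.algebraMap_residueField_eq_zero, ← hfactor, RingHom.comp_apply,
    map_eq_zero_iff j j.injective]

lemma comap_iotaT_bijective : Function.Bijective (PrimeSpectrum.comap (iotaT R)) :=
  Function.bijective_iff_has_inverse.mpr ⟨primeOver, primeOver_comap, comap_primeOver⟩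

end TRing

lemma Ultrafilter.exists_map_eq_of_surjective {α β : Type*} {g : α → β}
    (hg : Function.Surjective g) (V : Ultrafilter β) : ∃ U : Ultrafilter α, U.map g = V :=
  ⟨_, ofComapInfPrincipal_eq_of_map (s := Set.univ)
    (by rw [Set.image_univ, hg.range_eq]; exact Filter.univ_mem)⟩

section UltrafilterLimit

variable {R S : Type*} [CommRing R] [CommRing S]

def ultraLimitPrime (C : Set (PrimeSpectrum R)) (U : Ultrafilter C) : PrimeSpectrum R where
  asIdeal :=
    { carrier := ultraLimit C U
      zero_mem' := Filter.univ_mem' fun P => P.1.asIdeal.zero_mem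
      add_mem' := fun ha hb => Filter.mem_of_superset (Filter.inter_mem ha hb)
        fun P hP => P.1.asIdeal.add_mem hP.1 hP.2
      smul_mem' := fun c _ hx => Filter.mem_of_superset hx
        fun P hP => P.1.asIdeal.mul_mem_left c hP }
  isPrime := by
    refine ⟨fun htop => ?_, fun {x y} hxy => ?_⟩
    · have h1 : {P : C | (1 : R) ∈ P.1.asIdeal} ∈ U := Submodule.eq_top_iff'.mp htop 1
      simp only [Ideal.one_notMem, Set.ofPred_false] at h1
      exact Ultrafilter.empty_notMem h1
    · exact Ultrafilter.union_mem_iff.mp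
        (Filter.mem_of_superset hxy fun P hP => P.1.isPrime.mem_or_mem hP)

lemma coe_ultraLimitPrime (C : Set (PrimeSpectrum R)) (U : Ultrafilter C) :
    ((ultraLimitPrime C U).asIdeal : Set R) = ultraLimit C U := rfl

lemma ultraLimit_image_comap (f : R →+* S) (C : Set (PrimeSpectrum S)) (U : Ultrafilter C) :
    ultraLimit (PrimeSpectrum.comap f '' C) (U.map (C.imageFactorization (PrimeSpectrum.comap f)))
      = f ⁻¹' ultraLimit C U := rfl

lemma UltraClosed.image_comap (f : R →+* S) {C : Set (PrimeSpectrum S)} (hC : UltraClosed C) :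
    UltraClosed (PrimeSpectrum.comap f '' C) := by
  intro V P hP
  obtain ⟨U, rfl⟩ := Ultrafilter.exists_map_eq_of_surjective Set.imageFactorization_surjective V
  refine ⟨ultraLimitPrime C U, hC U _ (coe_ultraLimitPrime C U), ?_⟩
  rw [ultraLimit_image_comap] at hP
  exact PrimeSpectrum.ext (SetLike.coe_injective hP.symm)

lemma UltraClosed.of_image_comap {f : R →+* S} (hf : Function.Injective (PrimeSpectrum.comap f))
    {C : Set (PrimeSpectrum S)} (hC : UltraClosed (PrimeSpectrum.comap f '' C)) :
    UltraClosed C := by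
  intro U Q hQ
  obtain ⟨Q', hQ'C, hQ'⟩ := hC (U.map (C.imageFactorization (PrimeSpectrum.comap f)))
    (PrimeSpectrum.comap f Q) (by rw [ultraLimit_image_comap, ← hQ]; rfl)
  exact hf hQ' ▸ hQ'C

end UltrafilterLimit

theorem comap_iotaT_ultraHomeomorph (R : Type*) [CommRing R]
    (C : Set (PrimeSpectrum (TRing R))) (U : Ultrafilter C) :
    ultraLimit ((PrimeSpectrum.comap (iotaT R)) '' C)
        (U.map (fun P : C =>
          (⟨PrimeSpectrum.comap (iotaT R) P.1, Set.mem_image_of_mem _ P.2⟩ :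
            ↥((PrimeSpectrum.comap (iotaT R)) '' C)))) =
      ⇑(iotaT R) ⁻¹' ultraLimit C U ∧
    (UltraClosed C ↔ UltraClosed ((PrimeSpectrum.comap (iotaT R)) '' C)) ∧
    Function.Bijective (fun Q : PrimeSpectrum (TRing R) =>
      PrimeSpectrum.comap (iotaT R) Q) :=
  ⟨ultraLimit_image_comap (iotaT R) C U,
    ⟨UltraClosed.image_comap (iotaT R), UltraClosed.of_image_comap TRing.comap_iotaT_bijective.1⟩,
    TRing.comap_iotaT_bijective⟩
end
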